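/- If x is a beat point of a finite T₀-space X, then the order complex K(X) simplicially collapses to K(X ∖ {x}). In particular, if X is contractible, then K(X) is collapsible. -/

import Mathlib

/-!
STATEMENT 3: If x is a beat point of a finite T₀-space X, then the order complex K(X)
simplicially collapses to K(X ∖ {x}).  In particular, if X is contractible, then K(X) is
collapsible.

A finite T₀-space is identified with a finite poset (down-set topology).  The order
complex is the simplicial complex of nonempty chains, encoded as a finite set of finite
simplices with vertex type X; K(X ∖ {x}) is its subcomplex of chains avoiding x.
-/

noncomputable section

/-- The Alexandrov "down-set" topology on a poset: open sets are the lower sets. -/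
def downTop (X : Type*) [Preorder X] : TopologicalSpace X := Topology.lowerSet X

/-- `x` is a down beat point if the set of points strictly below it has a maximum, and an
up beat point if the set of points strictly above it has a minimum. -/
def IsBeatPoint {X : Type*} [PartialOrder X] (x : X) : Prop :=
  (∃ m, m < x ∧ ∀ y, y < x → y ≤ m) ∨ (∃ m, x < m ∧ ∀ y, x < y → m ≤ y)

/-- Elementary simplicial collapse: remove a free pair `(σ, τ)`, where `τ` is a proper
face of `σ` and of no other simplex of `K`. -/
def ElemSCollapse {V : Type*} [DecidableEq V] (K L : Finset (Finset V)) : Prop :=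
  ∃ σ ∈ K, ∃ τ ∈ K, τ ⊂ σ ∧ (∀ ρ ∈ K, τ ⊂ ρ → ρ = σ) ∧ L = (K.erase σ).erase τ

/-- `K` collapses simplicially to `L`: a finite sequence of elementary collapses. -/
def SCollapses {V : Type*} [DecidableEq V] (K L : Finset (Finset V)) : Prop :=
  Relation.ReflTransGen ElemSCollapse K L

/-- A finite simplicial complex is collapsible if it collapses to a single vertex. -/
def SCollapsible {V : Type*} [DecidableEq V] (K : Finset (Finset V)) : Prop :=
  ∃ v : V, SCollapses K {{v}}

open scoped Classical in
/-- The full subcomplex of the order complex of the poset `X` spanned by a subset `A`: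
its simplices are the nonempty chains of `X` contained in `A`. -/
def orderComplexIn (X : Type*) [Preorder X] [Fintype X] (A : Set X) : Finset (Finset X) :=
  Finset.univ.filter fun σ => σ.Nonempty ∧ IsChain (· ≤ ·) (σ : Set X) ∧ ↑σ ⊆ A

/-- The order complex of a finite poset: its simplices are the nonempty chains. -/
def orderComplex (X : Type*) [Preorder X] [Fintype X] : Finset (Finset X) :=
  orderComplexIn X Set.univ

/-!
If `x` is a beat point, some `m ≠ x` is comparable to `x` and to every point comparable to `x`,
so the link of `x` in `K(X)` is a cone with apex `m`. Pairing each chain `σ ∋ x` with `m ∉ σ`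
with `insert m σ`, largest `σ` first, collapses away every simplex containing `x`.

A homotopy between maps of finite spaces moves, locally in time, only downward, so a contraction
of `X` gives a fence `id = f₀ ≤ f₁ ≥ f₂ ≤ ⋯ fₙ = const` of monotone maps. Fences survive
retracting a beat point onto its `m`, and on a poset without beat points a monotone map
comparable to `id` is `id`, which forces a single point. Induction on the number of points then
chains the collapses of successive beat points.
-/

open Finset Topology

section Collapse

variable {V : Type*} [DecidableEq V]

lemma ElemSCollapse.image_map {W : Type*} [DecidableEq W] (f : V ↪ W)
    {K L : Finset (Finset V)} (h : ElemSCollapse K L) :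
    ElemSCollapse (K.image (map f)) (L.image (map f)) := by
  obtain ⟨σ, hσ, τ, hτ, hτσ, hfree, rfl⟩ := h
  refine ⟨σ.map f, mem_image_of_mem _ hσ, τ.map f, mem_image_of_mem _ hτ,
    map_ssubset_map.mpr hτσ, ?_, ?_⟩
  · intro ρ' hρ' hτρ
    obtain ⟨ρ, hρ, rfl⟩ := mem_image.mp hρ'
    rw [hfree ρ hρ (map_ssubset_map.mp hτρ)]
  · rw [image_erase (map_injective f), image_erase (map_injective f)]

lemma SCollapses.image_map {W : Type*} [DecidableEq W] (f : V ↪ W)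
    {K L : Finset (Finset V)} (h : SCollapses K L) :
    SCollapses (K.image (map f)) (L.image (map f)) :=
  h.lift _ fun _ _ h => h.image_map f

/-- Free pairs `(insert v τ, τ)` with a common apex `v` stay free while the other pairs are
removed, so they can be collapsed in any order. -/
lemma sCollapses_sdiff_of_free_cone_pairs {K S : Finset (Finset V)} {v : V} (hSK : S ⊆ K)
    (hv : ∀ τ ∈ S, v ∉ τ) (hinsert : ∀ τ ∈ S, insert v τ ∈ K)
    (hfree : ∀ τ ∈ S, ∀ ρ ∈ K, τ ⊂ ρ → ρ = insert v τ) :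
    SCollapses K (K \ (S ∪ S.image (insert v))) := by
  induction S using Finset.induction_on with
  | empty =>
    rw [image_empty, union_empty, sdiff_empty]
    exact Relation.ReflTransGen.refl
  | @insert τ S hτS ih =>
    simp only [mem_insert, forall_eq_or_imp] at hv hinsert hfree
    have hSK' : S ⊆ K := (subset_insert τ S).trans hSK
    refine (ih hSK' hv.2 hinsert.2 hfree.2).tail
      ⟨insert v τ, ?_, τ, ?_, ssubset_insert hv.1, fun ρ hρ => hfree.1 ρ (sdiff_subset hρ), ?_⟩
    · have hnotImage : insert v τ ∉ S.image (insert v) := by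
        intro h
        obtain ⟨τ', hτ', hττ'⟩ := mem_image.mp h
        rw [← erase_insert hv.1, ← hττ', erase_insert (hv.2 τ' hτ')] at hτS
        exact hτS hτ'
      have hnotMem : insert v τ ∉ S := fun h => hv.2 _ h (mem_insert_self v τ)
      simp [hinsert.1, hnotImage, hnotMem]
    · have hne : ∀ σ ∈ S, insert v σ ≠ τ := fun σ _ h => hv.1 (h ▸ mem_insert_self v σ)
      simpa [hSK (mem_insert_self τ S), hτS] using hne
    · ext ρ
      simp only [mem_sdiff, mem_erase, mem_union, mem_image, image_insert, mem_insert]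
      grind

section DeleteVertex

def coneBases (K : Finset (Finset V)) (x m : V) (k : ℕ) : Finset (Finset V) :=
  K.filter fun τ => x ∈ τ ∧ m ∉ τ ∧ #τ = k + 1

variable {K : Finset (Finset V)} {x m : V}

lemma mem_coneBases_union_image_insert_iff (hmx : m ≠ x)
    (herase : ∀ σ ∈ K, x ∈ σ → σ.erase m ∈ K) {k : ℕ} {ρ : Finset V} (hρ : ρ ∈ K) :
    ρ ∈ coneBases K x m k ∪ (coneBases K x m k).image (insert m) ↔
      x ∈ ρ ∧ #(ρ.erase m) = k + 1 := by
  simp only [coneBases, mem_union, mem_image, mem_filter]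
  constructor
  · rintro (⟨-, hxρ, hmρ, hcard⟩ | ⟨τ, ⟨-, hxτ, hmτ, hcard⟩, rfl⟩)
    · rw [erase_eq_of_notMem hmρ]; exact ⟨hxρ, hcard⟩
    · rw [erase_insert hmτ]; exact ⟨mem_insert_of_mem hxτ, hcard⟩
  · rintro ⟨hxρ, hcard⟩
    by_cases hmρ : m ∈ ρ
    · exact Or.inr ⟨ρ.erase m, ⟨herase ρ hρ hxρ, mem_erase.mpr ⟨hmx.symm, hxρ⟩,
        notMem_erase m ρ, hcard⟩, insert_erase hmρ⟩
    · rw [erase_eq_of_notMem hmρ] at hcard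
      exact Or.inl ⟨hρ, hxρ, hmρ, hcard⟩

lemma filter_card_erase_le_eq_sdiff (hmx : m ≠ x) (herase : ∀ σ ∈ K, x ∈ σ → σ.erase m ∈ K)
    (k : ℕ) :
    (K.filter fun ρ => x ∈ ρ → #(ρ.erase m) ≤ k) =
      (K.filter fun ρ => x ∈ ρ → #(ρ.erase m) ≤ k + 1) \
        (coneBases K x m k ∪ (coneBases K x m k).image (insert m)) := by
  ext ρ
  simp only [mem_filter, mem_sdiff]
  constructor
  · rintro ⟨hρ, hk⟩
    refine ⟨⟨hρ, fun hx => (hk hx).trans k.le_succ⟩, fun hpair => ?_⟩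
    obtain ⟨hx, hcard⟩ := (mem_coneBases_union_image_insert_iff hmx herase hρ).mp hpair
    have := hk hx
    omega
  · rintro ⟨⟨hρ, hk⟩, hpair⟩
    refine ⟨hρ, fun hx => ?_⟩
    have hne : #(ρ.erase m) ≠ k + 1 := fun h =>
      hpair ((mem_coneBases_union_image_insert_iff hmx herase hρ).mpr ⟨hx, h⟩)
    have := hk hx
    omega

lemma sCollapses_filter_card_erase_le_succ (hmx : m ≠ x)
    (hinsert : ∀ σ ∈ K, x ∈ σ → insert m σ ∈ K) (herase : ∀ σ ∈ K, x ∈ σ → σ.erase m ∈ K)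
    (k : ℕ) :
    SCollapses (K.filter fun ρ => x ∈ ρ → #(ρ.erase m) ≤ k + 1)
      (K.filter fun ρ => x ∈ ρ → #(ρ.erase m) ≤ k) := by
  rw [filter_card_erase_le_eq_sdiff hmx herase k]
  refine sCollapses_sdiff_of_free_cone_pairs ?_ (fun τ hτ => (mem_filter.mp hτ).2.2.1) ?_ ?_
  · intro τ hτ
    obtain ⟨hτK, -, hmτ, hcard⟩ := mem_filter.mp hτ
    exact mem_filter.mpr ⟨hτK, fun _ => by rw [erase_eq_of_notMem hmτ, hcard]⟩
  · intro τ hτ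
    obtain ⟨hτK, hxτ, hmτ, hcard⟩ := mem_filter.mp hτ
    exact mem_filter.mpr ⟨hinsert τ hτK hxτ, fun _ => by rw [erase_insert hmτ, hcard]⟩
  · intro τ hτ ρ hρ hτρ
    obtain ⟨-, hxτ, hmτ, hcard⟩ := mem_filter.mp hτ
    obtain ⟨-, hρk⟩ := mem_filter.mp hρ
    have hτ_eq : τ = ρ.erase m := eq_of_subset_of_card_le
      (subset_erase.mpr ⟨hτρ.subset, hmτ⟩) (hcard ▸ hρk (hτρ.subset hxτ))
    by_cases hmρ : m ∈ ρ
    · rw [hτ_eq, insert_erase hmρ]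
    · rw [erase_eq_of_notMem hmρ] at hτ_eq
      exact absurd hτ_eq hτρ.ne

theorem sCollapses_filter_notMem_of_link_cone (hmx : m ≠ x)
    (hinsert : ∀ σ ∈ K, x ∈ σ → insert m σ ∈ K) (herase : ∀ σ ∈ K, x ∈ σ → σ.erase m ∈ K) :
    SCollapses K (K.filter (x ∉ ·)) := by
  have hstages : ∀ n, SCollapses (K.filter fun ρ => x ∈ ρ → #(ρ.erase m) ≤ n)
      (K.filter fun ρ => x ∈ ρ → #(ρ.erase m) ≤ 0) := by
    intro n
    induction n with
    | zero => exact Relation.ReflTransGen.refl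
    | succ n ih => exact (sCollapses_filter_card_erase_le_succ hmx hinsert herase n).trans ih
  have htop : (K.filter fun ρ => x ∈ ρ → #(ρ.erase m) ≤ K.sup card) = K :=
    filter_true_of_mem fun ρ hρ _ => (card_erase_le).trans (le_sup (f := card) hρ)
  have hbot : (K.filter fun ρ => x ∈ ρ → #(ρ.erase m) ≤ 0) = K.filter (x ∉ ·) :=
    filter_congr fun ρ _ => ⟨fun h hx => (card_pos.mpr ⟨x, mem_erase.mpr ⟨hmx.symm, hx⟩⟩).ne'
      (Nat.le_zero.mp (h hx)), fun h hx => absurd hx h⟩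
  simpa only [htop, hbot] using hstages (K.sup card)

end DeleteVertex

end Collapse

section OrderComplex

variable {X : Type*} [Preorder X] [Fintype X]

lemma mem_orderComplexIn {A : Set X} {σ : Finset X} :
    σ ∈ orderComplexIn X A ↔ σ.Nonempty ∧ IsChain (· ≤ ·) (σ : Set X) ∧ ↑σ ⊆ A := by
  classical
  simp [orderComplexIn]

lemma mem_orderComplex {σ : Finset X} :
    σ ∈ orderComplex X ↔ σ.Nonempty ∧ IsChain (· ≤ ·) (σ : Set X) := by
  simp [orderComplex, mem_orderComplexIn]

lemma orderComplexIn_compl_singleton [DecidableEq X] (x : X) :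
    orderComplexIn X {x}ᶜ = (orderComplex X).filter (x ∉ ·) := by
  ext σ
  simp [mem_orderComplexIn, mem_orderComplex, Set.subset_compl_singleton_iff, and_assoc]

lemma orderComplexIn_eq_image_map [DecidableEq X] (A : Set X) [Fintype A] :
    orderComplexIn X A = (orderComplex A).image (map (Function.Embedding.subtype (· ∈ A))) := by
  classical
  ext σ
  simp only [mem_image, mem_orderComplexIn, mem_orderComplex]
  constructor
  · rintro ⟨hne, hch, hA⟩
    have hσ : (σ.subtype (· ∈ A)).map (Function.Embedding.subtype _) = σ :=
      subtype_map_of_mem hA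
    rw [← hσ, coe_map] at hch
    rw [← hσ, map_nonempty] at hne
    exact ⟨_, ⟨hne, (IsChain.image_relEmbedding_iff (φ := OrderEmbedding.subtype _)).mp hch⟩, hσ⟩
  · rintro ⟨τ, ⟨hne, hch⟩, rfl⟩
    refine ⟨hne.map, ?_, map_subtype_subset τ⟩
    rw [coe_map]
    exact hch.image (OrderEmbedding.subtype _)

lemma orderComplex_eq_singleton [Subsingleton X] (c : X) : orderComplex X = {{c}} := by
  ext σ
  rw [mem_orderComplex, mem_singleton]
  constructor
  · rintro ⟨hne, -⟩
    exact eq_singleton_iff_nonempty_unique_mem.mpr ⟨hne, fun _ _ => Subsingleton.elim _ _⟩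
  · rintro rfl
    exact ⟨singleton_nonempty c, Set.subsingleton_of_subsingleton.isChain⟩

end OrderComplex

section BeatPoint

variable {X : Type*} [PartialOrder X]

lemma IsBeatPoint.exists_mem_upperBounds_Iio_lowerBounds_Ioi {x : X} (hx : IsBeatPoint x) :
    ∃ m, (m < x ∨ x < m) ∧ m ∈ upperBounds (Set.Iio x) ∧ m ∈ lowerBounds (Set.Ioi x) := by
  rcases hx with ⟨m, hmx, hmax⟩ | ⟨m, hxm, hmin⟩
  · exact ⟨m, Or.inl hmx, hmax, fun y hy => hmx.le.trans (le_of_lt hy)⟩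
  · exact ⟨m, Or.inr hxm, fun y hy => (le_of_lt hy).trans hxm.le, hmin⟩

lemma IsBeatPoint.sCollapses_orderComplex [Fintype X] [DecidableEq X] {x : X}
    (hx : IsBeatPoint x) : SCollapses (orderComplex X) (orderComplexIn X {x}ᶜ) := by
  obtain ⟨m, hmx, hup, hlow⟩ := hx.exists_mem_upperBounds_Iio_lowerBounds_Ioi
  have hm : m ≠ x := hmx.elim ne_of_lt ne_of_gt
  rw [orderComplexIn_compl_singleton]
  refine sCollapses_filter_notMem_of_link_cone hm ?_ ?_
  · intro σ hσ hxσ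
    obtain ⟨-, hch⟩ := mem_orderComplex.mp hσ
    refine mem_orderComplex.mpr ⟨insert_nonempty m σ, ?_⟩
    rw [coe_insert]
    refine hch.insert fun y hy _ => ?_
    rcases eq_or_ne y x with rfl | hyx
    · exact hmx.imp le_of_lt le_of_lt
    · rcases hch hy hxσ hyx with h | h
      · exact Or.inr (hup (lt_of_le_of_ne h hyx))
      · exact Or.inl (hlow (lt_of_le_of_ne h hyx.symm))
  · intro σ hσ hxσ
    obtain ⟨-, hch⟩ := mem_orderComplex.mp hσ
    exact mem_orderComplex.mpr ⟨⟨x, mem_erase.mpr ⟨hm.symm, hxσ⟩⟩,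
      hch.mono (coe_subset.mpr (erase_subset m σ))⟩

end BeatPoint

section Fence

variable {X Y : Type*} [Preorder X] [Preorder Y]

/-- For finite `T₀`-spaces, maps are homotopic exactly when they are joined by a fence of such
steps. -/
def FenceStep (f g : X → Y) : Prop :=
  Monotone f ∧ Monotone g ∧ (f ≤ g ∨ g ≤ f)

def FenceHomotopic (f g : X → Y) : Prop :=
  Relation.ReflTransGen FenceStep f g

def FenceContractible (X : Type*) [Preorder X] : Prop :=
  ∃ c : X, FenceHomotopic (id : X → X) (Function.const X c)

lemma FenceStep.symm {f g : X → Y} (h : FenceStep f g) : FenceStep g f :=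
  ⟨h.2.1, h.1, h.2.2.symm⟩

lemma FenceHomotopic.comp_comp {Z W : Type*} [Preorder Z] [Preorder W] {f g : X → Y}
    {r : Y → W} {i : Z → X} (hr : Monotone r) (hi : Monotone i) (h : FenceHomotopic f g) :
    FenceHomotopic (r ∘ f ∘ i) (r ∘ g ∘ i) :=
  h.lift (fun f => r ∘ f ∘ i) fun _ _ ⟨hf, hg, hfg⟩ =>
    ⟨hr.comp (hf.comp hi), hr.comp (hg.comp hi),
      hfg.imp (fun h a => hr (h (i a))) (fun h a => hr (h (i a)))⟩

lemma FenceContractible.of_retract {A : Type*} [Preorder A] {i : A → X} {r : X → A}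
    (hi : Monotone i) (hr : Monotone r) (hri : ∀ a, r (i a) = a) (h : FenceContractible X) :
    FenceContractible A := by
  obtain ⟨c, hc⟩ := h
  refine ⟨r c, ?_⟩
  have := hc.comp_comp hr hi
  rwa [show r ∘ id ∘ i = id from funext hri] at this

/-- Near any time `t`, a homotopy between maps of finite down-set spaces lies below its value at
`t`, since the sets `Iic (H (t, y))` are open. -/
lemma fenceHomotopic_of_homotopy [TopologicalSpace X] [Topology.IsLowerSet X]
    [TopologicalSpace Y] [Topology.IsLowerSet Y] [Finite X] {f g : C(X, Y)}
    (H : f.Homotopy g) : FenceHomotopic ⇑f ⇑g := by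
  have hmono : ∀ t, Monotone fun y => H (t, y) := fun t =>
    Topology.IsLowerSet.monotone_iff_continuous.mpr (by fun_prop)
  have hlocal : ∀ t, ∀ᶠ s in 𝓝 t, (fun y => H (s, y)) ≤ fun y => H (t, y) := by
    intro t
    refine Filter.eventually_all.mpr fun y => ?_
    have hIic : IsOpen (Set.Iic (H (t, y))) :=
      Topology.IsLowerSet.isOpen_iff_isLowerSet.mpr (isLowerSet_Iic _)
    exact (show Continuous fun s => H (s, y) by fun_prop).continuousAt.eventually_mem
      (hIic.mem_nhds le_rfl)
  have := PreconnectedSpace.induction₂'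
    (fun s t => FenceHomotopic (fun y => H (s, y)) (fun y => H (t, y)))
    (fun t => (hlocal t).mono fun s hs =>
      have hstep : FenceStep (fun y => H (t, y)) (fun y => H (s, y)) :=
        ⟨hmono t, hmono s, Or.inr hs⟩
      ⟨.single hstep, .single hstep.symm⟩)
    ⟨fun _ _ _ => Relation.ReflTransGen.trans⟩ 0 1
  simpa using this

lemma fenceContractible_of_contractibleSpace [TopologicalSpace X] [Topology.IsLowerSet X]
    [Finite X] [ContractibleSpace X] : FenceContractible X := by
  obtain ⟨c, ⟨H⟩⟩ := id_nullhomotopic X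
  exact ⟨c, fenceHomotopic_of_homotopy H⟩

end Fence

section Core

variable {X : Type*} [PartialOrder X]

lemma FenceContractible.compl_singleton_of_isBeatPoint {x : X} (hx : IsBeatPoint x)
    (h : FenceContractible X) : FenceContractible ({x}ᶜ : Set X) := by
  classical
  obtain ⟨m, hmx, hup, hlow⟩ := hx.exists_mem_upperBounds_Iio_lowerBounds_Ioi
  have hm : m ∈ ({x}ᶜ : Set X) := hmx.elim ne_of_lt ne_of_gt
  let r : X → ({x}ᶜ : Set X) := fun y => if hy : y = x then ⟨m, hm⟩ else ⟨y, hy⟩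
  refine h.of_retract (i := Subtype.val) (r := r) (fun _ _ => id) ?_ fun y => dif_neg y.2
  intro a b hab
  by_cases ha : a = x <;> by_cases hb : b = x <;> simp only [r, ha, hb, dif_pos, dif_neg,
    not_false_eq_true, le_refl]
  · exact hlow (lt_of_le_of_ne (ha ▸ hab) (Ne.symm hb))
  · exact hup (lt_of_le_of_ne (hb ▸ hab) ha)
  · exact hab

lemma isBeatPoint_toDual_iff {x : X} : IsBeatPoint (OrderDual.toDual x) ↔ IsBeatPoint x := by
  simp only [IsBeatPoint, OrderDual.exists, OrderDual.forall, OrderDual.toDual_lt_toDual,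
    OrderDual.toDual_le_toDual]
  exact or_comm

variable [Finite X]

lemma eq_id_of_le_id_of_forall_not_isBeatPoint (hnb : ∀ z : X, ¬IsBeatPoint z) {f : X → X}
    (hf : Monotone f) (hle : f ≤ id) : f = id := by
  funext a
  induction a using WellFoundedLT.induction with
  | _ a ih =>
    by_contra hne
    exact hnb a (Or.inl ⟨f a, lt_of_le_of_ne (hle a) hne,
      fun y hy => (ih y hy).symm.trans_le (hf hy.le)⟩)

lemma eq_id_of_id_le_of_forall_not_isBeatPoint (hnb : ∀ z : X, ¬IsBeatPoint z) {f : X → X}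
    (hf : Monotone f) (hle : id ≤ f) : f = id := by
  have := eq_id_of_le_id_of_forall_not_isBeatPoint (X := Xᵒᵈ)
    (fun z => isBeatPoint_toDual_iff.not.mpr (hnb z.ofDual))
    (f := OrderDual.toDual ∘ f ∘ OrderDual.ofDual) hf.dual hle
  funext a
  exact congrFun this (OrderDual.toDual a)

lemma FenceHomotopic.eq_id_of_forall_not_isBeatPoint (hnb : ∀ z : X, ¬IsBeatPoint z)
    {f : X → X} (h : FenceHomotopic id f) : f = id := by
  induction h with
  | refl => rfl
  | tail _ hstep ih =>
    obtain ⟨-, hg, hle | hle⟩ := ih ▸ hstep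
    · exact eq_id_of_id_le_of_forall_not_isBeatPoint hnb hg hle
    · exact eq_id_of_le_id_of_forall_not_isBeatPoint hnb hg hle

lemma FenceContractible.subsingleton_of_forall_not_isBeatPoint
    (hnb : ∀ z : X, ¬IsBeatPoint z) (h : FenceContractible X) : Subsingleton X := by
  obtain ⟨c, hc⟩ := h
  have hconst := hc.eq_id_of_forall_not_isBeatPoint hnb
  exact ⟨fun a b => (congrFun hconst a).symm.trans (congrFun hconst b)⟩

end Core

theorem sCollapsible_orderComplex_of_fenceContractible {X : Type*} [PartialOrder X] [Fintype X]
    [DecidableEq X] (h : FenceContractible X) : SCollapsible (orderComplex X) := by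
  induction hn : Fintype.card X using Nat.strong_induction_on generalizing X with
  | _ n ih =>
  by_cases hbeat : ∃ x : X, IsBeatPoint x
  · obtain ⟨x, hx⟩ := hbeat
    obtain ⟨v, hv⟩ := ih _ (hn ▸ Fintype.card_subtype_lt (x := x) (not_not.mpr rfl))
      (h.compl_singleton_of_isBeatPoint hx) rfl
    have hcollapse : SCollapses (orderComplexIn X {x}ᶜ) {{↑v}} := by
      simpa [orderComplexIn_eq_image_map] using hv.image_map (Function.Embedding.subtype _)
    exact ⟨v, hx.sCollapses_orderComplex.trans hcollapse⟩
  · have := h.subsingleton_of_forall_not_isBeatPoint (not_exists.mp hbeat)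
    obtain ⟨c, -⟩ := h
    exact ⟨c, orderComplex_eq_singleton c ▸ Relation.ReflTransGen.refl⟩

theorem orderComplex_collapses_of_beat_point (X : Type) [PartialOrder X] [Fintype X]
    [DecidableEq X] :
    (∀ x : X, IsBeatPoint x → SCollapses (orderComplex X) (orderComplexIn X {x}ᶜ)) ∧
      (@ContractibleSpace X (downTop X) → SCollapsible (orderComplex X)) := by
  refine ⟨fun x hx => hx.sCollapses_orderComplex, fun hX => ?_⟩
  let := downTop X
  have : Topology.IsLowerSet X := ⟨rfl⟩
  exact sCollapsible_orderComplex_of_fenceContractible fenceContractible_of_contractibleSpace
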